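/- arXiv:1807.04709 — 4 statements merged into one kernel-verified Lean document; each statement's English description precedes it below -/
import Mathlib

section
/- Let A be an invertible nonnegative n×n matrix with nonnegative inverse. If A_{ij} ≠ 0, then (A⁻¹)_{jk} = 0 for all k ≠ i. -/
namespace Matrix

variable {l m n R : Type*} [Fintype m] [Semiring R] [PartialOrder R] [IsOrderedRing R]

theorem mul_apply_eq_zero_iff_of_nonneg {A : Matrix l m R} {B : Matrix m n R}
    (hA : ∀ i j, 0 ≤ A i j) (hB : ∀ i j, 0 ≤ B i j) {i : l} {k : n} :
    (A * B) i k = 0 ↔ ∀ j, A i j * B j k = 0 := by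
  simpa only [mul_apply, Finset.mem_univ, true_imp_iff] using
    Finset.sum_eq_zero_iff_of_nonneg (s := Finset.univ) fun j _ => mul_nonneg (hA i j) (hB j k)

theorem apply_eq_zero_of_mul_eq_one_of_nonneg [DecidableEq l] [NoZeroDivisors R]
    {A : Matrix l m R} {B : Matrix m l R} (hAB : A * B = 1)
    (hA : ∀ i j, 0 ≤ A i j) (hB : ∀ i j, 0 ≤ B i j) {i k : l} {j : m}
    (hij : A i j ≠ 0) (hki : k ≠ i) : B j k = 0 := by
  have hik : (A * B) i k = 0 := by rw [hAB, one_apply_ne hki.symm]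
  exact (mul_eq_zero.mp ((mul_apply_eq_zero_iff_of_nonneg hA hB).mp hik j)).resolve_left hij

end Matrix

/-- If `A` is an invertible nonnegative matrix with nonnegative inverse and `A i j ≠ 0`,
then `A⁻¹ j k = 0` for all `k ≠ i`. -/
theorem stmt_1 {n : ℕ} (A : Matrix (Fin n) (Fin n) ℝ)
    (hA : IsUnit A)
    (hpos : ∀ i j, 0 ≤ A i j)
    (hinv : ∀ i j, 0 ≤ A⁻¹ i j)
    (i j : Fin n) (hij : A i j ≠ 0) :
    ∀ k, k ≠ i → A⁻¹ j k = 0 := fun _ hki =>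
  Matrix.apply_eq_zero_of_mul_eq_one_of_nonneg
    (A.mul_nonsing_inv ((A.isUnit_iff_isUnit_det).mp hA)) hpos hinv hij hki
end

section
/- Let q : ℝⁿ → ℝⁿ be a twice continuously differentiable bijection whose inverse is also twice continuously differentiable, and suppose q is an order isomorphism for the componentwise order. Then for every z, the Jacobian of q at z is a nonnegative monomial matrix (invertible with exactly one nonzero, positive entry in each row and column). -/
/-!
Difference quotients of a monotone map along a nonnegative direction are nonnegative, so the
Jacobian of a differentiable monotone map has nonnegative entries. Since `q` and its inverse are
both monotone, the chain rule exhibits the Jacobian `J` of `q` as a nonnegative matrix with a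
nonnegative inverse `K`. Such a matrix is monomial: if `J i k * K k i > 0` and also `J i j > 0`,
then `(K * J) k j ≥ K k i * J i j > 0`, which forces `j = k`.
-/

open Filter Matrix

theorem HasFDerivAt.apply_nonneg_of_monotone {E F : Type*}
    [NormedAddCommGroup E] [NormedSpace ℝ E] [PartialOrder E] [IsOrderedAddMonoid E]
    [PosSMulMono ℝ E]
    [NormedAddCommGroup F] [NormedSpace ℝ F] [PartialOrder F] [IsOrderedAddMonoid F]
    [PosSMulMono ℝ F] [OrderClosedTopology F]
    {f : E → F} {f' : E →L[ℝ] F} {x v : E} (hf' : HasFDerivAt f f' x) (hf : Monotone f)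
    (hv : 0 ≤ v) : 0 ≤ f' v := by
  refine ge_of_tendsto (hf'.lim_real v) ?_
  filter_upwards [eventually_ge_atTop 0] with c hc
  have hstep : x ≤ x + c⁻¹ • v := le_add_of_nonneg_right (smul_nonneg (inv_nonneg.mpr hc) hv)
  exact smul_nonneg hc (sub_nonneg.mpr (hf hstep))

section
variable {R ι : Type*} [CommSemiring R] [LinearOrder R] [IsStrictOrderedRing R]
  [Fintype ι] [DecidableEq ι] {A B : Matrix ι ι R}

theorem Matrix.existsUnique_row_ne_zero_of_nonneg_of_mul_eq_one
    (hA : ∀ i j, 0 ≤ A i j) (hB : ∀ i j, 0 ≤ B i j) (hAB : A * B = 1) (hBA : B * A = 1)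
    (i : ι) : ∃! j, A i j ≠ 0 := by
  have hdiag : ∑ k, A i k * B k i ≠ 0 := by
    rw [← Matrix.mul_apply, hAB, Matrix.one_apply_eq]; exact one_ne_zero
  obtain ⟨k, -, hk⟩ := Finset.exists_ne_zero_of_sum_ne_zero hdiag
  have hBki : 0 < B k i := (hB k i).lt_of_ne' (right_ne_zero_of_mul hk)
  refine ⟨k, left_ne_zero_of_mul hk, fun j hj => ?_⟩
  have hpos : 0 < (B * A) k j :=
    (mul_pos hBki ((hA i j).lt_of_ne' hj)).trans_le
      (Finset.single_le_sum (fun m _ => mul_nonneg (hB k m) (hA m j)) (Finset.mem_univ i))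
  by_contra hjk
  rw [hBA, Matrix.one_apply_ne (Ne.symm hjk)] at hpos
  exact hpos.false

theorem Matrix.existsUnique_col_ne_zero_of_nonneg_of_mul_eq_one
    (hA : ∀ i j, 0 ≤ A i j) (hB : ∀ i j, 0 ≤ B i j) (hAB : A * B = 1) (hBA : B * A = 1)
    (j : ι) : ∃! i, A i j ≠ 0 :=
  Matrix.existsUnique_row_ne_zero_of_nonneg_of_mul_eq_one (A := Aᵀ) (B := Bᵀ)
    (fun i j => hA j i) (fun i j => hB j i)
    (by rw [← Matrix.transpose_mul, hBA, Matrix.transpose_one])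
    (by rw [← Matrix.transpose_mul, hAB, Matrix.transpose_one]) j
end

theorem LinearMap.toMatrix'_fderiv_mul_of_leftInverse {𝕜 ι κ : Type*} [NontriviallyNormedField 𝕜]
    [Fintype ι] [DecidableEq ι] [Fintype κ] [DecidableEq κ]
    {f : (ι → 𝕜) → (κ → 𝕜)} {g : (κ → 𝕜) → (ι → 𝕜)} {x : ι → 𝕜}
    (hgf : Function.LeftInverse g f) (hg : DifferentiableAt 𝕜 g (f x))
    (hf : DifferentiableAt 𝕜 f x) :
    LinearMap.toMatrix' (fderiv 𝕜 g (f x) : (κ → 𝕜) →ₗ[𝕜] ι → 𝕜) *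
      LinearMap.toMatrix' (fderiv 𝕜 f x : (ι → 𝕜) →ₗ[𝕜] κ → 𝕜) = 1 := by
  have hchain : (fderiv 𝕜 g (f x)).comp (fderiv 𝕜 f x) = ContinuousLinearMap.id 𝕜 _ := by
    rw [← fderiv_comp x hg hf, hgf.comp_eq_id, fderiv_id]
  rw [← LinearMap.toMatrix'_comp, ← ContinuousLinearMap.toLinearMap_comp, hchain,
    ContinuousLinearMap.coe_id, LinearMap.toMatrix'_id]

/-- If `q : ℝⁿ → ℝⁿ` is a twice continuously differentiable bijection with twice continuously
differentiable inverse which is an order isomorphism for the componentwise order, then the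
Jacobian of `q` at every point is a nonnegative monomial matrix: it is invertible and has
exactly one nonzero, positive, entry in each row and in each column. -/
theorem stmt_4 {n : ℕ} (q : (Fin n → ℝ) → (Fin n → ℝ))
    (hbij : Function.Bijective q)
    (hq : ContDiff ℝ 2 q)
    (hq' : ContDiff ℝ 2 (Function.invFun q))
    (hiso : ∀ u v : Fin n → ℝ, u ≤ v ↔ q u ≤ q v) :
    ∀ z : Fin n → ℝ,
      IsUnit (Matrix.of fun i j => fderiv ℝ q z (Pi.single j 1) i) ∧
      (∀ i, ∃! j, fderiv ℝ q z (Pi.single j 1) i ≠ 0) ∧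
      (∀ j, ∃! i, fderiv ℝ q z (Pi.single j 1) i ≠ 0) ∧
      (∀ i j, fderiv ℝ q z (Pi.single j 1) i ≠ 0 → 0 < fderiv ℝ q z (Pi.single j 1) i) := by
  intro z
  set p := Function.invFun q
  have hq_diff := hq.differentiable two_ne_zero
  have hp_diff := hq'.differentiable two_ne_zero
  have hq_mono : Monotone q := fun u v => (hiso u v).mp
  have hp_mono : Monotone p := fun u v huv => (hiso _ _).mpr <| by
    rwa [Function.rightInverse_invFun hbij.2 u, Function.rightInverse_invFun hbij.2 v]
  set J := LinearMap.toMatrix' (fderiv ℝ q z : (Fin n → ℝ) →ₗ[ℝ] Fin n → ℝ)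
  set K := LinearMap.toMatrix' (fderiv ℝ p (q z) : (Fin n → ℝ) →ₗ[ℝ] Fin n → ℝ)
  have hKJ : K * J = 1 := LinearMap.toMatrix'_fderiv_mul_of_leftInverse
    (Function.leftInverse_invFun hbij.1) (hp_diff _) (hq_diff z)
  have hJK : J * K = 1 := mul_eq_one_comm.mp hKJ
  have hJ : ∀ i j, 0 ≤ J i j := fun i j =>
    (hq_diff z).hasFDerivAt.apply_nonneg_of_monotone hq_mono (Pi.single_nonneg.mpr zero_le_one) i
  have hK : ∀ i j, 0 ≤ K i j := fun i j =>
    (hp_diff (q z)).hasFDerivAt.apply_nonneg_of_monotone hp_mono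
      (Pi.single_nonneg.mpr zero_le_one) i
  exact ⟨⟨⟨J, K, hJK, hKJ⟩, rfl⟩,
    Matrix.existsUnique_row_ne_zero_of_nonneg_of_mul_eq_one hJ hK hJK hKJ,
    Matrix.existsUnique_col_ne_zero_of_nonneg_of_mul_eq_one hJ hK hJK hKJ,
    fun i j h => (hJ i j).lt_of_ne' h⟩
end

section
/- Let q : ℝ → ℝ be continuous and strictly monotone increasing, and let X be a real random variable such that q(X) has the same distribution as X. Then q(c) = c for every c in the support of the distribution of X. -/
/-!
Since `q` is strictly increasing, `q ⁻¹' Iic (q a) = Iic a`, so invariance of `μ` gives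
`μ (Iic (q a)) = μ (Iic a)`: the distribution function agrees at `a` and `q a`, and `μ` puts no
mass between them. If `q c ≠ c`, continuity of `q` at `c` produces a point `a` with `c` strictly
between `a` and `q a`, i.e. an open `μ`-null neighbourhood of `c`.
-/

open MeasureTheory Set Filter Topology

lemma ContinuousAt.exists_mem_uIoo_of_apply_ne {α : Type*} [LinearOrder α] [TopologicalSpace α]
    [OrderTopology α] [DenselyOrdered α] [NoMinOrder α] [NoMaxOrder α] {f : α → α} {c : α}
    (hf : ContinuousAt f c) (hc : f c ≠ c) : ∃ a, c ∈ uIoo a (f a) := by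
  rcases hc.lt_or_gt with hlt | hgt
  · obtain ⟨a, hfa, hca⟩ := ((hf.eventually (gt_mem_nhds hlt)).filter_mono nhdsWithin_le_nhds
      |>.and (self_mem_nhdsWithin (s := Ioi c))).exists
    exact ⟨a, mem_uIoo_of_gt hfa hca⟩
  · obtain ⟨a, hfa, hac⟩ := ((hf.eventually (lt_mem_nhds hgt)).filter_mono nhdsWithin_le_nhds
      |>.and (self_mem_nhdsWithin (s := Iio c))).exists
    exact ⟨a, mem_uIoo_of_lt hac hfa⟩

section

variable {α : Type*} [LinearOrder α] [TopologicalSpace α] [OrderClosedTopology α]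
  [MeasurableSpace α] [OpensMeasurableSpace α] {μ : Measure α}

lemma measure_Iic_apply_eq_of_map_eq_self {f : α → α} (hf : Measurable f) (hmono : StrictMono f)
    (hμ : μ.map f = μ) (a : α) : μ (Iic (f a)) = μ (Iic a) := by
  conv_lhs => rw [← hμ]
  rw [Measure.map_apply hf measurableSet_Iic]
  congr 1
  ext x
  exact hmono.le_iff_le

lemma measure_uIoc_eq_zero_of_measure_Iic_eq [IsFiniteMeasure μ] {a b : α}
    (h : μ (Iic a) = μ (Iic b)) : μ (uIoc a b) = 0 := by
  wlog hab : a ≤ b generalizing a b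
  · rw [uIoc_comm]
    exact this h.symm (le_of_not_ge hab)
  rw [uIoc_of_le hab, ← Iic_sdiff_Iic, measure_sdiff (Iic_subset_Iic.2 hab)
    nullMeasurableSet_Iic (measure_ne_top μ _), h, tsub_self]

end

/-- If `q : ℝ → ℝ` is continuous and strictly increasing and preserves the law `μ` of a
random variable, then `q c = c` for every `c` in the support of `μ` (i.e. every point all of
whose open neighborhoods have positive measure). -/
theorem stmt_8 (q : ℝ → ℝ) (hq : Continuous q) (hmono : StrictMono q)
    (μ : Measure ℝ) [IsProbabilityMeasure μ]
    (hpres : Measure.map q μ = μ)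
    (c : ℝ) (hc : ∀ U : Set ℝ, IsOpen U → c ∈ U → 0 < μ U) :
    q c = c := by
  by_contra hne
  obtain ⟨a, hca⟩ := hq.continuousAt.exists_mem_uIoo_of_apply_ne hne
  have hnull : μ (uIoc a (q a)) = 0 := measure_uIoc_eq_zero_of_measure_Iic_eq
    (measure_Iic_apply_eq_of_map_eq_self hq.measurable hmono hpres a).symm
  exact (hc _ isOpen_Ioo hca).ne' (measure_mono_null Ioo_subset_Ioc_self hnull)
end

section
/- Let q : ℝⁿ → ℝⁿ be given by q(x)_i = g_i(x_{σ(i)}) for a permutation σ and continuous strictly increasing functions g_i, and let μ = μ₁ ⊗ ⋯ ⊗ μₙ be a product probability measure with each μ_i having full support on ℝ, all μ_i equal. If q pushes μ forward to μ, then each g_i is the identity, i.e., q is the coordinate permutation x ↦ (x_{σ(i)})_i. -/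
/-!
Each coordinate of `q` is `g i` applied to a coordinate of a point drawn from the product measure,
so comparing `i`-th marginals shows that `g i` preserves the common factor `ν₀`. A strictly
increasing map preserving `ν₀` fixes every distribution value, `ν₀ (Iic (g a)) = ν₀ (Iic a)`; if
`g a ≠ a`, the open interval between `a` and `g a` would then be `ν₀`-null, which full support
forbids.
-/

open MeasureTheory Set

section StrictMono

variable {α : Type*} [LinearOrder α] [TopologicalSpace α] [DenselyOrdered α] [MeasurableSpace α]
  {μ : Measure α} [IsFiniteMeasure μ] [μ.IsOpenPosMeasure]

lemma le_of_measure_Iic_le_measure_Iic [OrderClosedTopology α] [OpensMeasurableSpace α]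
    {b c : α} (hbc : b ≤ c) (hμ : μ (Iic c) ≤ μ (Iic b)) : c ≤ b := by
  by_contra! hlt
  have hdiff : μ (Iic c \ Iic b) = 0 := by
    rw [measure_sdiff (Iic_subset_Iic.mpr hbc) measurableSet_Iic.nullMeasurableSet
      (measure_ne_top μ _), tsub_eq_zero_of_le hμ]
  have hIoo : Ioo b c ⊆ Iic c \ Iic b := fun x hx => ⟨hx.2.le, not_le.mpr hx.1⟩
  exact (isOpen_Ioo.measure_pos μ (nonempty_Ioo.mpr hlt)).ne' (measure_mono_null hIoo hdiff)

lemma StrictMono.eq_self_of_map_eq [OrderTopology α] [SecondCountableTopology α] [BorelSpace α]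
    {g : α → α} (hg : StrictMono g) (hmap : μ.map g = μ) (a : α) : g a = a := by
  have hIic : μ (Iic (g a)) = μ (Iic a) := by
    conv_lhs => rw [← hmap]
    rw [Measure.map_apply hg.monotone.measurable measurableSet_Iic]
    congr 1
    ext y
    simp [hg.le_iff_le]
  rcases le_total (g a) a with h | h
  · exact le_antisymm h (le_of_measure_Iic_le_measure_Iic h hIic.ge)
  · exact le_antisymm (le_of_measure_Iic_le_measure_Iic h hIic.le) h

end StrictMono

lemma MeasureTheory.Measure.pi_map_eval_of_isProbabilityMeasure {ι : Type*} [Fintype ι]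
    {X : ι → Type*} [∀ i, MeasurableSpace (X i)] (μ : ∀ i, Measure (X i))
    [∀ i, IsProbabilityMeasure (μ i)] (i : ι) :
    (Measure.pi μ).map (Function.eval i) = μ i := by
  classical
  simp [Measure.pi_map_eval]

theorem stmt_18_general {n : ℕ} (σ : Equiv.Perm (Fin n)) (g : Fin n → ℝ → ℝ)
    (hmono : ∀ i, StrictMono (g i))
    (q : (Fin n → ℝ) → (Fin n → ℝ)) (hq : ∀ x i, q x i = g i (x (σ i)))
    (ν : Fin n → Measure ℝ) [∀ i, IsProbabilityMeasure (ν i)]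
    (ν₀ : Measure ℝ) (hsame : ∀ i, ν i = ν₀)
    (hsupp : ∀ U : Set ℝ, IsOpen U → U.Nonempty → 0 < ν₀ U)
    (hpres : Measure.map q (Measure.pi ν) = Measure.pi ν) :
    (∀ i x, g i x = x) ∧ ∀ x, q x = fun i => x (σ i) := by
  have : ν₀.IsOpenPosMeasure := ⟨fun U hU hne => (hsupp U hU hne).ne'⟩
  have hq_meas : Measurable q := by
    rw [show q = fun x i => g i (x (σ i)) from funext fun x => funext (hq x)]
    exact measurable_pi_lambda _ fun i => (hmono i).monotone.measurable.comp (measurable_pi_apply _)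
  have hid : ∀ i x, g i x = x := by
    intro i
    have : IsProbabilityMeasure ν₀ := hsame i ▸ inferInstance
    refine (hmono i).eq_self_of_map_eq (μ := ν₀) ?_
    have hcoord : Function.eval i ∘ q = g i ∘ Function.eval (σ i) := funext fun x => hq x i
    have hmarg := congrArg (Measure.map (Function.eval i)) hpres
    rwa [Measure.map_map (measurable_pi_apply i) hq_meas, hcoord,
      ← Measure.map_map (hmono i).monotone.measurable (measurable_pi_apply (σ i)),
      Measure.pi_map_eval_of_isProbabilityMeasure, Measure.pi_map_eval_of_isProbabilityMeasure,
      hsame, hsame] at hmarg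
  exact ⟨hid, fun x => funext fun i => by rw [hq x i, hid i]⟩

/-- If `q x i = g i (x (σ i))` with continuous strictly increasing `g i`, and `q` preserves
a product probability measure with identical fully supported factors, then each `g i` is the
identity and `q` is the coordinate permutation. -/
theorem stmt_18 {n : ℕ} (σ : Equiv.Perm (Fin n)) (g : Fin n → ℝ → ℝ)
    (hcont : ∀ i, Continuous (g i)) (hmono : ∀ i, StrictMono (g i))
    (q : (Fin n → ℝ) → (Fin n → ℝ)) (hq : ∀ x i, q x i = g i (x (σ i)))
    (ν : Fin n → Measure ℝ) [∀ i, IsProbabilityMeasure (ν i)]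
    (ν₀ : Measure ℝ) (hsame : ∀ i, ν i = ν₀)
    (hsupp : ∀ U : Set ℝ, IsOpen U → U.Nonempty → 0 < ν₀ U)
    (hpres : Measure.map q (Measure.pi ν) = Measure.pi ν) :
    (∀ i x, g i x = x) ∧ ∀ x, q x = fun i => x (σ i) :=
  stmt_18_general σ g hmono q hq ν ν₀ hsame hsupp hpres
end
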